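/- arXiv:1201.2323 — 2 statements merged into one kernel-verified Lean document; each statement's English description precedes it below -/
import Mathlib

section
/- For every pair of distinct positive real numbers a and b, setting v = (a-b)/(a+b), one has exp(v²/6) ≤ A(a,b)/I(a,b) ≤ exp(ln(e/2)·v²). -/
/-!
Put `v = (a - b) / (a + b)`. Writing `a = A (1 + v)` and `b = A (1 - v)` turns `log (A / I)` into
`1 - N v / (2 v)` with `N t = (1 + t) log (1 + t) - (1 - t) log (1 - t)` (`oddMulLog`), even in `v`,
so both bounds reduce to bounds on `N t` for `t ∈ (0, 1)`. Since `N' t = 2 + log (1 - t²) ≤ 2 - t²`,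
`N t ≤ 2 t - t³ / 3`. For the other side, `ψ t = N t - 2 t + 2 (1 - log 2) t³` vanishes at `0` and `1`,
and `ψ' t = t² (log (1 - t²) / t² + 6 (1 - log 2))` changes sign at most once, from `+` to `-`,
because `log (1 - s) / s` decreases (concavity of `log`); hence `ψ ≥ 0` on `[0, 1]`.
-/

noncomputable def A (a b : ℝ) : ℝ := (a + b) / 2

noncomputable def G (a b : ℝ) : ℝ := Real.sqrt (a * b)

noncomputable def H (a b : ℝ) : ℝ := 2 * a * b / (a + b)

noncomputable def I (a b : ℝ) : ℝ :=
  (1 / Real.exp 1) * (a ^ a / b ^ b) ^ (1 / (a - b))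

noncomputable def Q (t s a b : ℝ) : ℝ :=
  G (t * a + (1 - t) * b) (t * b + (1 - t) * a) ^ s * A a b ^ (1 - s)

noncomputable def f (u s x : ℝ) : ℝ :=
  1 - (1 / (2 * x)) * Real.log ((1 + x) / (1 - x))
    - (1 / 2) * Real.log (1 - x ^ 2) + (s / 2) * Real.log (1 - u * x ^ 2)

noncomputable def h (u s x : ℝ) : ℝ :=
  -x + (1 / 2) * Real.log ((1 + x) / (1 - x)) - s * u * x ^ 3 / (1 - u * x ^ 2)

open Real Set

theorem min_le_of_hasDerivAt_of_sign_change {φ φ' : ℝ → ℝ} {a b t : ℝ} (ht : t ∈ Icc a b)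
    (hφ : ContinuousOn φ (Icc a b)) (hφ' : ∀ x ∈ Ioo a b, HasDerivAt φ (φ' x) x)
    (hsign : ∀ x ∈ Ioo a b, ∀ y ∈ Ioo a b, x ≤ y → φ' x < 0 → φ' y ≤ 0) :
    min (φ a) (φ b) ≤ φ t := by
  by_cases hinc : ∀ x ∈ Ioo a t, 0 ≤ φ' x
  · have hmono : MonotoneOn φ (Icc a t) := by
      refine monotoneOn_of_hasDerivWithinAt_nonneg (convex_Icc a t)
        (hφ.mono (Icc_subset_Icc_right ht.2)) (fun x hx ↦ ?_) (by simpa using hinc)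
      rw [interior_Icc] at hx ⊢
      exact (hφ' x ⟨hx.1, hx.2.trans_le ht.2⟩).hasDerivWithinAt
    exact min_le_of_left_le (hmono (left_mem_Icc.2 ht.1) (right_mem_Icc.2 ht.1) ht.1)
  · push Not at hinc
    obtain ⟨x, hx, hx'⟩ := hinc
    have hx_mem : x ∈ Ioo a b := ⟨hx.1, hx.2.trans_le ht.2⟩
    have hanti : AntitoneOn φ (Icc t b) := by
      refine antitoneOn_of_hasDerivWithinAt_nonpos (f' := φ') (convex_Icc t b)
        (hφ.mono (Icc_subset_Icc_left ht.1)) (fun y hy ↦ ?_) (fun y hy ↦ ?_) <;>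
        rw [interior_Icc] at hy
      · rw [interior_Icc]
        exact (hφ' y ⟨ht.1.trans_lt hy.1, hy.2⟩).hasDerivWithinAt
      · exact hsign x hx_mem y ⟨ht.1.trans_lt hy.1, hy.2⟩ (hx.2.trans hy.1).le hx'
    exact min_le_of_right_le (hanti (left_mem_Icc.2 ht.2) (right_mem_Icc.2 ht.2) ht.2)

theorem antitoneOn_log_one_sub_div : AntitoneOn (fun s : ℝ ↦ log (1 - s) / s) (Ioo 0 1) := by
  have hconv : ConvexOn ℝ (Iio 1) (fun s : ℝ ↦ -log (1 - s)) := by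
    let g : ℝ →ᵃ[ℝ] ℝ := AffineMap.lineMap 1 0
    have := (strictConcaveOn_log_Ioi.concaveOn.comp_affineMap g).neg
    have hdom : g ⁻¹' Ioi 0 = Iio 1 := by
      ext s; simp [g, AffineMap.lineMap_apply]
    have hfun : -log ∘ g = fun s ↦ -log (1 - s) := by
      ext s; simp [g, AffineMap.lineMap_apply, neg_add_eq_sub]
    rwa [hdom, hfun] at this
  intro x hx y hy hxy
  have := hconv.secant_mono (a := 0) (by simp) (by simpa using hx.2) (by simpa using hy.2)
    hx.1.ne' hy.1.ne' hxy
  simpa [neg_div] using this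

noncomputable def oddMulLog (t : ℝ) : ℝ := (1 + t) * log (1 + t) - (1 - t) * log (1 - t)

theorem oddMulLog_neg (t : ℝ) : oddMulLog (-t) = -oddMulLog t := by
  simp only [oddMulLog, sub_neg_eq_add, ← sub_eq_add_neg]
  ring

@[simp]
theorem oddMulLog_zero : oddMulLog 0 = 0 := by
  simp [oddMulLog]

theorem oddMulLog_one : oddMulLog 1 = 2 * log 2 := by
  norm_num [oddMulLog]

@[fun_prop]
theorem continuous_oddMulLog : Continuous oddMulLog := by
  unfold oddMulLog
  fun_prop

theorem hasDerivAt_oddMulLog {x : ℝ} (hx : x ∈ Ioo (-1) 1) :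
    HasDerivAt oddMulLog (2 + log (1 - x ^ 2)) x := by
  have hplus : 1 + x ≠ 0 := by linarith [hx.1]
  have hminus : 1 - x ≠ 0 := by linarith [hx.2]
  refine (((hasDerivAt_mul_log hplus).comp x ((hasDerivAt_id x).const_add 1)).sub
    ((hasDerivAt_mul_log hminus).comp x ((hasDerivAt_id x).const_sub 1))).congr_deriv ?_
  rw [show 1 - x ^ 2 = (1 + x) * (1 - x) by ring, log_mul hplus hminus]
  ring

theorem oddMulLog_le {t : ℝ} (ht0 : 0 ≤ t) (ht1 : t < 1) : oddMulLog t ≤ 2 * t - t ^ 3 / 3 := by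
  let φ : ℝ → ℝ := fun x ↦ 2 * x - x ^ 3 / 3 - oddMulLog x
  have hmono : MonotoneOn φ (Icc 0 t) := by
    refine monotoneOn_of_hasDerivWithinAt_nonneg (f' := fun x ↦ -x ^ 2 - log (1 - x ^ 2))
      (convex_Icc 0 t) (by fun_prop) (fun x hx ↦ ?_) (fun x hx ↦ ?_) <;>
      rw [interior_Icc] at hx
    · rw [interior_Icc]
      have hφ' := (((hasDerivAt_id x).const_mul 2).sub ((hasDerivAt_pow 3 x).div_const 3)).sub
        (hasDerivAt_oddMulLog ⟨by linarith [hx.1], hx.2.trans ht1⟩)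
      refine (hφ'.congr_deriv ?_).hasDerivWithinAt
      push_cast; ring
    · have hx_sq : 0 < 1 - x ^ 2 := by nlinarith [hx.1, hx.2]
      linarith [log_le_sub_one_of_pos hx_sq]
  have := hmono (left_mem_Icc.2 ht0) (right_mem_Icc.2 ht0) ht0
  simp only [φ, oddMulLog_zero] at this
  linarith

theorem le_oddMulLog {t : ℝ} (ht : t ∈ Icc 0 1) :
    2 * t - 2 * (1 - log 2) * t ^ 3 ≤ oddMulLog t := by
  set k := 6 * (1 - log 2)
  let ψ : ℝ → ℝ := fun x ↦ oddMulLog x - 2 * x + k / 3 * x ^ 3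
  have hψ' : ∀ x ∈ Ioo (0 : ℝ) 1, HasDerivAt ψ (log (1 - x ^ 2) + k * x ^ 2) x := by
    intro x hx
    refine (((hasDerivAt_oddMulLog ⟨by linarith [hx.1], hx.2⟩).sub
      ((hasDerivAt_id x).const_mul 2)).add ((hasDerivAt_pow 3 x).const_mul (k / 3))).congr_deriv ?_
    push_cast; ring
  have hsign : ∀ x ∈ Ioo (0 : ℝ) 1, ∀ y ∈ Ioo (0 : ℝ) 1, x ≤ y →
      log (1 - x ^ 2) + k * x ^ 2 < 0 → log (1 - y ^ 2) + k * y ^ 2 ≤ 0 := by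
    intro x hx y hy hxy hneg
    have hx2 : x ^ 2 ∈ Ioo (0 : ℝ) 1 := ⟨pow_pos hx.1 2, by nlinarith [hx.1, hx.2]⟩
    have hy2 : y ^ 2 ∈ Ioo (0 : ℝ) 1 := ⟨pow_pos hy.1 2, by nlinarith [hy.1, hy.2]⟩
    have hslope := antitoneOn_log_one_sub_div hx2 hy2 (pow_le_pow_left₀ hx.1.le hxy 2)
    rw [div_le_iff₀ hy2.1] at hslope
    have : log (1 - x ^ 2) / x ^ 2 < -k := by rw [div_lt_iff₀ hx2.1]; linarith
    nlinarith
  have hψ0 : ψ 0 = 0 := by simp [ψ]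
  have hψ1 : ψ 1 = 0 := by simp only [ψ, oddMulLog_one, k]; ring
  have := min_le_of_hasDerivAt_of_sign_change ht (by fun_prop) hψ' hsign
  simp only [hψ0, hψ1, min_self, ψ, k] at this
  linarith

theorem oddMulLog_div_abs (v : ℝ) : oddMulLog |v| / (2 * |v|) = oddMulLog v / (2 * v) := by
  rcases abs_cases v with ⟨hv, -⟩ | ⟨hv, -⟩ <;> rw [hv]
  rw [oddMulLog_neg, mul_neg, neg_div_neg_eq]

theorem sq_div_six_le_one_sub_oddMulLog_div {v : ℝ} (hv0 : v ≠ 0) (hv1 : |v| < 1) :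
    v ^ 2 / 6 ≤ 1 - oddMulLog v / (2 * v) := by
  have ht : 0 < 2 * |v| := by positivity
  rw [← oddMulLog_div_abs, ← sq_abs, le_sub_comm, div_le_iff₀ ht]
  nlinarith [oddMulLog_le (abs_nonneg v) hv1]

theorem one_sub_oddMulLog_div_le {v : ℝ} (hv0 : v ≠ 0) (hv1 : |v| ≤ 1) :
    1 - oddMulLog v / (2 * v) ≤ (1 - log 2) * v ^ 2 := by
  have ht : 0 < 2 * |v| := by positivity
  rw [← oddMulLog_div_abs, ← sq_abs, sub_le_comm, le_div_iff₀ ht]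
  nlinarith [le_oddMulLog ⟨abs_nonneg v, hv1⟩]

theorem log_I {a b : ℝ} (ha : 0 < a) (hb : 0 < b) :
    log (I a b) = (a * log a - b * log b) / (a - b) - 1 := by
  have hpow : 0 < a ^ a / b ^ b := by positivity
  rw [I, one_div (exp 1), log_mul (by positivity) (rpow_pos_of_pos hpow _).ne', log_inv, log_exp,
    log_rpow hpow, log_div (by positivity) (by positivity), log_rpow ha, log_rpow hb]
  ring

theorem A_div_I_eq_exp {a b : ℝ} (ha : 0 < a) (hb : 0 < b) (hab : a ≠ b) :
    A a b / I a b =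
      exp (1 - oddMulLog ((a - b) / (a + b)) / (2 * ((a - b) / (a + b)))) := by
  have hI : 0 < I a b := by unfold I; positivity
  have hA : 0 < A a b := by unfold A; positivity
  rw [← exp_log (div_pos hA hI), log_div hA.ne' hI.ne', log_I ha hb]
  congr 1
  set v := (a - b) / (a + b) with hv
  set m := A a b with hm
  have hsum : a + b ≠ 0 := by positivity
  have hv0 : v ≠ 0 := div_ne_zero (sub_ne_zero.2 hab) hsum
  have ha' : a = m * (1 + v) := by rw [hm, hv, A]; field_simp; ring
  have hb' : b = m * (1 - v) := by rw [hm, hv, A]; field_simp; ring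
  have h1v : 0 < 1 + v := pos_of_mul_pos_right (ha'.symm ▸ ha) hA.le
  have h2v : 0 < 1 - v := pos_of_mul_pos_right (hb'.symm ▸ hb) hA.le
  have hdiff : a - b = 2 * m * v := by rw [ha', hb']; ring
  rw [hdiff, ha', hb', log_mul hA.ne' h1v.ne', log_mul hA.ne' h2v.ne', oddMulLog]
  field_simp
  ring

theorem stmt_11 (a b : ℝ) (ha : 0 < a) (hb : 0 < b) (hab : a ≠ b) (v : ℝ)
    (hv : v = (a - b) / (a + b)) :
    Real.exp (v^2 / 6) ≤ A a b / I a b ∧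
      A a b / I a b ≤ Real.exp (Real.log (Real.exp 1 / 2) * v^2) := by
  have hsum : 0 < a + b := by positivity
  have hv0 : v ≠ 0 := hv ▸ div_ne_zero (sub_ne_zero.2 hab) hsum.ne'
  have hv1 : |v| < 1 := by
    rw [hv, abs_div, abs_of_pos hsum, div_lt_one hsum, abs_sub_lt_iff]
    constructor <;> linarith
  have hlog : log (exp 1 / 2) = 1 - log 2 := by rw [log_div (exp_ne_zero 1) two_ne_zero, log_exp]
  rw [A_div_I_eq_exp ha hb hab, ← hv, hlog, exp_le_exp, exp_le_exp]
  exact ⟨sq_div_six_le_one_sub_oddMulLog_div hv0 hv1, one_sub_oddMulLog_div_le hv0 hv1.le⟩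
end

section
/- Let s ≥ 1 and u ∈ [0,1] with 3·s·u ≤ 1. Then the function h_{u,s} is positive on (0,1), and consequently f_{u,s} is strictly increasing on (0,1). -/
open Real Set Topology

/-! A Padé-type lower bound for `artanh x - x`, which dominates the last term of `h` as soon as
`3 s u ≤ 1`; since `f' = h / x²`, positivity of `h` gives the monotonicity of `f`. -/

lemma Real.hasDerivAt_artanh {x : ℝ} (hx : x ∈ Ioo (-1) 1) :
    HasDerivAt artanh (1 / (1 - x ^ 2)) x := by
  obtain ⟨hx₁, hx₂⟩ := hx
  have hlog : HasDerivAt (fun y ↦ 1 / 2 * (log (1 + y) - log (1 - y))) (1 / (1 - x ^ 2)) x := by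
    have hp : 1 + x ≠ 0 := by linarith
    have hm : 1 - x ≠ 0 := by linarith
    have h₁ := ((hasDerivAt_id' x).const_add 1).log hp
    have h₂ := ((hasDerivAt_id' x).const_sub 1).log hm
    refine ((h₁.sub h₂).const_mul (1 / 2 : ℝ)).congr_deriv ?_
    have : 1 - x ^ 2 ≠ 0 := by nlinarith
    field_simp
    ring
  refine hlog.congr_of_eventuallyEq ?_
  filter_upwards [Ioo_mem_nhds hx₁ hx₂] with y ⟨hy₁, hy₂⟩
  rw [artanh_eq_half_log ⟨hy₁.le, hy₂.le⟩, log_div (by linarith) (by linarith)]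

lemma Real.cube_div_three_sub_sq_lt_artanh_sub_self {x : ℝ} (hx : x ∈ Ioo 0 1) :
    x ^ 3 / (3 - x ^ 2) < artanh x - x := by
  set g : ℝ → ℝ := fun y ↦ artanh y - y - y ^ 3 / (3 - y ^ 2)
  have hg : ∀ y ∈ Ico (0 : ℝ) 1, HasDerivAt g (4 * y ^ 4 / ((1 - y ^ 2) * (3 - y ^ 2) ^ 2)) y := by
    rintro y ⟨hy₀, hy₁⟩
    have h₁ : 1 - y ^ 2 ≠ 0 := by nlinarith
    have h₃ : 3 - y ^ 2 ≠ 0 := by nlinarith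
    have hq := (hasDerivAt_pow 3 y).div ((hasDerivAt_pow 2 y).const_sub 3) h₃
    refine (((hasDerivAt_artanh ⟨by linarith, hy₁⟩).sub (hasDerivAt_id y)).sub hq).congr_deriv ?_
    field_simp
    ring
  have hmono : StrictMonoOn g (Ico 0 1) := by
    refine strictMonoOn_of_hasDerivWithinAt_pos (convex_Ico 0 1)
      (fun y hy ↦ (hg y hy).continuousAt.continuousWithinAt)
      (fun y hy ↦ (hg y (interior_subset hy)).hasDerivWithinAt) ?_
    rintro y hy
    rw [interior_Ico] at hy
    have : 0 < 1 - y ^ 2 := by nlinarith [hy.1, hy.2]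
    have : 0 < 3 - y ^ 2 := by nlinarith [hy.1, hy.2]
    exact div_pos (by positivity [hy.1]) (by positivity)
  have := hmono ⟨le_rfl, one_pos⟩ (Ioo_subset_Ico_self hx) hx.1
  simp only [g, artanh_zero] at this
  linarith

lemma h_eq_artanh_sub {u s x : ℝ} (hx : x ∈ Ioo (-1) 1) :
    h u s x = artanh x - x - s * u * x ^ 3 / (1 - u * x ^ 2) := by
  rw [h, artanh_eq_half_log ⟨hx.1.le, hx.2.le⟩]
  ring

lemma h_pos {u s x : ℝ} (hs : 1 ≤ s) (hu : 0 ≤ u) (h3su : 3 * s * u ≤ 1) (hx : x ∈ Ioo 0 1) :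
    0 < h u s x := by
  obtain ⟨hx₀, hx₁⟩ := hx
  have hux : 0 < 1 - u * x ^ 2 := by nlinarith
  have h3x : 0 < 3 - x ^ 2 := by nlinarith
  -- `s u (3 - x²) ≤ 1 - u x²` rearranges to `3 s u - 1 ≤ (s - 1) u x²`.
  have hle : s * u * x ^ 3 / (1 - u * x ^ 2) ≤ x ^ 3 / (3 - x ^ 2) := by
    rw [div_le_div_iff₀ hux h3x]
    have : 0 ≤ (s - 1) * u * x ^ 2 := by positivity [sub_nonneg.2 hs]
    have : s * u * (3 - x ^ 2) ≤ 1 - u * x ^ 2 := by nlinarith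
    nlinarith [pow_pos hx₀ 3]
  rw [h_eq_artanh_sub ⟨by linarith, hx₁⟩]
  linarith [cube_div_three_sub_sq_lt_artanh_sub_self ⟨hx₀, hx₁⟩]

lemma hasDerivAt_f {u s x : ℝ} (hu : u ≤ 1) (hx : x ∈ Ioo 0 1) :
    HasDerivAt (f u s) (h u s x / x ^ 2) x := by
  obtain ⟨hx₀, hx₁⟩ := hx
  have h₁ : 1 - x ^ 2 ≠ 0 := by nlinarith
  have hu₁ : 1 - u * x ^ 2 ≠ 0 := by nlinarith
  have hf : f u s =ᶠ[𝓝 x] fun y ↦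
      1 - artanh y / y - 1 / 2 * log (1 - y ^ 2) + s / 2 * log (1 - u * y ^ 2) := by
    filter_upwards [Ioo_mem_nhds (by linarith : (-1 : ℝ) < x) hx₁] with y ⟨hy₁, hy₂⟩
    rw [f, artanh_eq_half_log ⟨hy₁.le, hy₂.le⟩]
    ring
  have hA := (hasDerivAt_artanh ⟨by linarith, hx₁⟩).div (hasDerivAt_id' x) hx₀.ne'
  have hL₁ := ((hasDerivAt_pow 2 x).const_sub 1).log h₁
  have hL₂ := (((hasDerivAt_pow 2 x).const_mul u).const_sub 1).log hu₁
  refine HasDerivAt.congr_of_eventuallyEq (HasDerivAt.congr_deriv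
    (((hA.const_sub 1).sub (hL₁.const_mul (1 / 2))).add (hL₂.const_mul (s / 2))) ?_) hf
  rw [h_eq_artanh_sub ⟨by linarith, hx₁⟩]
  field_simp
  ring

lemma strictMonoOn_f {u s : ℝ} (hu : u ≤ 1) (hpos : ∀ x ∈ Ioo (0 : ℝ) 1, 0 < h u s x) :
    StrictMonoOn (f u s) (Ioo 0 1) :=
  strictMonoOn_of_hasDerivWithinAt_pos (convex_Ioo 0 1)
    (fun x hx ↦ (hasDerivAt_f hu hx).continuousAt.continuousWithinAt)
    (fun x hx ↦ (hasDerivAt_f hu (interior_subset hx)).hasDerivWithinAt)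
    (fun x hx ↦ by
      rw [interior_Ioo] at hx
      exact div_pos (hpos x hx) (pow_pos hx.1 2))

theorem stmt_15 (s u : ℝ) (hs : 1 ≤ s) (hu : u ∈ Set.Icc (0:ℝ) 1)
    (h3su : 3 * s * u ≤ 1) :
    (∀ x ∈ Set.Ioo (0:ℝ) 1, 0 < h u s x) ∧ StrictMonoOn (f u s) (Set.Ioo (0:ℝ) 1) := by
  have hpos : ∀ x ∈ Ioo (0 : ℝ) 1, 0 < h u s x := fun _ ↦ h_pos hs hu.1 h3su
  exact ⟨hpos, strictMonoOn_f hu.2 hpos⟩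
end
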